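/- arXiv:1605.07830 — 5 statements merged into one kernel-verified Lean document; each statement's English description precedes it below -/
import Mathlib

section
/- Let f : [0,1]^d → ℝ be continuously differentiable and fix i ∈ {1,…,d}. If there are constants c, C ≥ 0 such that c ≤ |∂f/∂x_i(x)| ≤ C for all x ∈ [0,1]^d, and if the total variance D is strictly positive, then c²/(12D) ≤ S_i^tot ≤ C²/(12D). -/
open MeasureTheory Real

noncomputable section

/-- The unit cube `[0,1]^d` in `ℝ^d`. -/
def unitCube (d : ℕ) : Set (Fin d → ℝ) := Set.Icc 0 1

/-- The partial derivative `∂f/∂x_i` at the point `x`. -/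
def pderivI {d : ℕ} (f : (Fin d → ℝ) → ℝ) (i : Fin d) (x : Fin d → ℝ) : ℝ :=
  deriv (fun t : ℝ => f (Function.update x i t)) (x i)

/-- `u_i(x) = f(x) - ∫₀¹ f(x₁,…,x_{i-1},t,x_{i+1},…,x_d) dt`, the sum of all ANOVA
terms of `f` depending on `x_i`. -/
def uComp {d : ℕ} (f : (Fin d → ℝ) → ℝ) (i : Fin d) (x : Fin d → ℝ) : ℝ :=
  f x - ∫ t in (0:ℝ)..1, f (Function.update x i t)

/-- The total variance `D = ∫ f² dx − (∫ f dx)²` over the unit cube. -/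
def totVar {d : ℕ} (f : (Fin d → ℝ) → ℝ) : ℝ :=
  (∫ x in unitCube d, (f x) ^ 2) - (∫ x in unitCube d, f x) ^ 2

/-- The total partial variance `D_i^tot = ∫ u_i² dx`. -/
def DTot {d : ℕ} (f : (Fin d → ℝ) → ℝ) (i : Fin d) : ℝ :=
  ∫ x in unitCube d, (uComp f i x) ^ 2

/-- The total Sobol' sensitivity index `S_i^tot = D_i^tot / D`. -/
def STot {d : ℕ} (f : (Fin d → ℝ) → ℝ) (i : Fin d) : ℝ :=
  DTot f i / totVar f

/-- The DGSM `ν_i = ∫ (∂f/∂x_i)² dx`. -/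
def nuDGSM {d : ℕ} (f : (Fin d → ℝ) → ℝ) (i : Fin d) : ℝ :=
  ∫ x in unitCube d, (pderivI f i x) ^ 2

/-- The DGSM `w_i^{(m)} = ∫ x_i^m (∂f/∂x_i) dx`. -/
def wDGSM {d : ℕ} (f : (Fin d → ℝ) → ℝ) (i : Fin d) (m : ℝ) : ℝ :=
  ∫ x in unitCube d, (x i) ^ m * pderivI f i x

/-- The DGSM `ς_i = (1/2) ∫ x_i (1 - x_i) (∂f/∂x_i)² dx`. -/
def sigmaDGSM {d : ℕ} (f : (Fin d → ℝ) → ℝ) (i : Fin d) : ℝ :=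
  (1 / 2) * ∫ x in unitCube d, x i * (1 - x i) * (pderivI f i x) ^ 2


/-! Fix all coordinates but the `i`-th. By the mean value theorem the slice `g(s) = f(…, s, …)`
satisfies `c |s - t| ≤ |g s - g t| ≤ C |s - t|` on `[0,1]`. For independent uniform `S, T`,
`Var g = E (g S - g T)² / 2`, so the variance of `g` lies between `c² Var S = c²/12` and `C²/12`.
On the slice, `u_i` is `g` minus its mean, hence `D_i^tot` is the average of these slice
variances over the remaining coordinates (Fubini) and lies in `[c²/12, C²/12]`. -/

open ProbabilityTheory Set

lemma exists_mem_uIcc_sub_eq_deriv_mul_sub {g : ℝ → ℝ} (hg : Differentiable ℝ g) (s t : ℝ) :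
    ∃ ξ ∈ uIcc s t, g s - g t = deriv g ξ * (s - t) := by
  rcases lt_trichotomy s t with hst | rfl | hts
  · obtain ⟨ξ, hξ, h⟩ :=
      exists_deriv_eq_slope g hst hg.continuous.continuousOn hg.differentiableOn
    refine ⟨ξ, Icc_subset_uIcc (Ioo_subset_Icc_self hξ), ?_⟩
    rw [h]; field_simp [sub_ne_zero.2 hst.ne']; ring
  · exact ⟨s, left_mem_uIcc, by simp⟩
  · obtain ⟨ξ, hξ, h⟩ :=
      exists_deriv_eq_slope g hts hg.continuous.continuousOn hg.differentiableOn
    refine ⟨ξ, Icc_subset_uIcc' (Ioo_subset_Icc_self hξ), ?_⟩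
    rw [h]; field_simp [sub_ne_zero.2 hts.ne']

lemma sq_sub_mem_Icc_of_abs_deriv_mem_Icc {g : ℝ → ℝ} (hg : Differentiable ℝ g) {I : Set ℝ}
    (hI : I.OrdConnected) {c C : ℝ} (hc : 0 ≤ c) (hbound : ∀ s ∈ I, |deriv g s| ∈ Icc c C)
    {s t : ℝ} (hs : s ∈ I) (ht : t ∈ I) :
    (g s - g t) ^ 2 ∈ Icc (c ^ 2 * (s - t) ^ 2) (C ^ 2 * (s - t) ^ 2) := by
  obtain ⟨ξ, hξ, hmvt⟩ := exists_mem_uIcc_sub_eq_deriv_mul_sub hg s t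
  obtain ⟨hcξ, hCξ⟩ := hbound ξ (hI.uIcc_subset hs ht hξ)
  rw [hmvt, mul_pow, ← sq_abs (deriv g ξ)]
  exact ⟨by gcongr, by gcongr⟩

section Variance

variable {Ω : Type*} [MeasurableSpace Ω] {μ : Measure Ω} [IsProbabilityMeasure μ] {X Y : Ω → ℝ}

lemma integral_prod_sub_sq_eq_two_mul_variance (hX : MemLp X 2 μ) :
    ∫ p, (X p.1 - X p.2) ^ 2 ∂μ.prod μ = 2 * Var[X; μ] := by
  have hX₁ := hX.integrable one_le_two
  have hmean : ∫ p, (X p.1 - X p.2) ∂μ.prod μ = 0 := by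
    rw [integral_sub (hX₁.comp_fst μ) (hX₁.comp_snd μ), integral_fun_fst, integral_fun_snd]
    simp
  have hsum : Var[fun p => X p.1 + -X p.2; μ.prod μ] = Var[X; μ] + Var[X; μ] := by
    simpa only [Pi.neg_apply, variance_neg] using variance_add_prod hX hX.neg (ν := μ)
  rw [← variance_of_integral_eq_zero (X := fun p : Ω × Ω => X p.1 - X p.2)
    ((hX.comp_fst μ).sub (hX.comp_snd μ)).aemeasurable hmean]
  simp only [sub_eq_add_neg, hsum]
  ring

lemma variance_le_of_ae_sq_sub_le (hX : MemLp X 2 μ) (hY : MemLp Y 2 μ)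
    (h : ∀ᵐ p ∂μ.prod μ, (X p.1 - X p.2) ^ 2 ≤ (Y p.1 - Y p.2) ^ 2) :
    Var[X; μ] ≤ Var[Y; μ] := by
  have hint {Z : Ω → ℝ} (hZ : MemLp Z 2 μ) :
      Integrable (fun p => (Z p.1 - Z p.2) ^ 2) (μ.prod μ) :=
    ((hZ.comp_fst μ).sub (hZ.comp_snd μ)).integrable_sq
  have hmono := integral_mono_ae (hint hX) (hint hY) h
  rw [integral_prod_sub_sq_eq_two_mul_variance hX,
    integral_prod_sub_sq_eq_two_mul_variance hY] at hmono
  linarith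

end Variance

instance : IsProbabilityMeasure (volume.restrict (Icc (0 : ℝ) 1)) := ⟨by simp⟩

lemma Continuous.memLp_two_restrict_Icc {g : ℝ → ℝ} (hg : Continuous g) (a b : ℝ) :
    MemLp g 2 (volume.restrict (Icc a b)) :=
  (memLp_two_iff_integrable_sq hg.aestronglyMeasurable).2 (hg.pow 2).integrableOn_Icc

lemma variance_id_restrict_Icc_zero_one : Var[id; volume.restrict (Icc (0 : ℝ) 1)] = 1 / 12 := by
  rw [variance_eq_sub (continuous_id.memLp_two_restrict_Icc 0 1)]
  simp only [integral_Icc_eq_integral_Ioc, ← intervalIntegral.integral_of_le zero_le_one]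
  norm_num [integral_pow]

lemma variance_mem_Icc_of_abs_deriv_mem_Icc {g : ℝ → ℝ} (hg : Differentiable ℝ g) {c C : ℝ}
    (hc : 0 ≤ c) (hbound : ∀ s ∈ Icc (0 : ℝ) 1, |deriv g s| ∈ Icc c C) :
    Var[g; volume.restrict (Icc 0 1)] ∈ Icc (c ^ 2 / 12) (C ^ 2 / 12) := by
  set U := volume.restrict (Icc (0 : ℝ) 1)
  have hlinear (a : ℝ) : Var[fun s => a * s; U] = a ^ 2 / 12 := by
    rw [variance_const_mul, ← Function.id_def, variance_id_restrict_Icc_zero_one]; ring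
  have hlinear_memLp (a : ℝ) : MemLp (fun s => a * s) 2 U :=
    (continuous_const.mul continuous_id).memLp_two_restrict_Icc 0 1
  have hg_memLp : MemLp g 2 U := hg.continuous.memLp_two_restrict_Icc 0 1
  have hU : ∀ᵐ s ∂U, s ∈ Icc (0 : ℝ) 1 := ae_restrict_mem measurableSet_Icc
  have hpairs : ∀ᵐ p ∂U.prod U,
      (g p.1 - g p.2) ^ 2 ∈ Icc (c ^ 2 * (p.1 - p.2) ^ 2) (C ^ 2 * (p.1 - p.2) ^ 2) := by
    filter_upwards [measurePreserving_fst.quasiMeasurePreserving.ae hU,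
      measurePreserving_snd.quasiMeasurePreserving.ae hU] with p h₁ h₂
    exact sq_sub_mem_Icc_of_abs_deriv_mem_Icc hg ordConnected_Icc hc hbound h₁ h₂
  constructor
  · rw [← hlinear]
    refine variance_le_of_ae_sq_sub_le (hlinear_memLp c) hg_memLp ?_
    filter_upwards [hpairs] with p hp
    rw [← mul_sub, mul_pow]
    exact hp.1
  · rw [← hlinear]
    refine variance_le_of_ae_sq_sub_le hg_memLp (hlinear_memLp C) ?_
    filter_upwards [hpairs] with p hp
    rw [← mul_sub, mul_pow]
    exact hp.2

section InsertNth

variable {n : ℕ} {α : Fin (n + 1) → Type*} [∀ j, MeasurableSpace (α j)]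
  (μ : ∀ j, Measure (α j)) [∀ j, SigmaFinite (μ j)] (i : Fin (n + 1))
  {E : Type*} [NormedAddCommGroup E] {φ : (∀ j, α j) → E}

theorem integrable_prod_comp_insertNth (hφ : Integrable φ (Measure.pi μ)) :
    Integrable (fun z : α i × (∀ j, α (i.succAbove j)) => φ (i.insertNth z.1 z.2))
      ((μ i).prod (Measure.pi fun j => μ (i.succAbove j))) :=
  ((measurePreserving_piFinSuccAbove μ i).symm.integrable_comp_emb
    (MeasurableEquiv.measurableEmbedding _)).2 hφ

theorem integral_pi_eq_integral_integral_insertNth [NormedSpace ℝ E]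
    (hφ : Integrable φ (Measure.pi μ)) :
    ∫ x, φ x ∂Measure.pi μ =
      ∫ y, ∫ s, φ (i.insertNth s y) ∂μ i ∂Measure.pi fun j => μ (i.succAbove j) := by
  rw [← integral_prod_symm _ (integrable_prod_comp_insertNth μ i hφ)]
  exact ((measurePreserving_piFinSuccAbove μ i).symm.integral_comp' φ).symm

theorem MeasureTheory.Integrable.integral_insertNth [NormedSpace ℝ E]
    (hφ : Integrable φ (Measure.pi μ)) :
    Integrable (fun y => ∫ s, φ (i.insertNth s y) ∂μ i) (Measure.pi fun j => μ (i.succAbove j)) :=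
  (integrable_prod_comp_insertNth μ i hφ).integral_prod_right

end InsertNth

lemma differentiable_insertNth {n : ℕ} (i : Fin (n + 1)) (y : Fin n → ℝ) :
    Differentiable ℝ fun s : ℝ => (i.insertNth s y : Fin (n + 1) → ℝ) := by
  have h (s : ℝ) : (i.insertNth s y : Fin (n + 1) → ℝ) =
      Function.update (i.insertNth (0 : ℝ) y) i s :=
    (Fin.update_insertNth _ _ _ _).symm
  rw [funext h]
  exact fun s => (hasDerivAt_update _ i s).differentiableAt

lemma volume_restrict_unitCube (d : ℕ) :
    volume.restrict (unitCube d) = Measure.pi fun _ => volume.restrict (Icc (0 : ℝ) 1) := by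
  rw [unitCube, ← pi_univ_Icc, volume_pi, Measure.restrict_pi_pi]; rfl

lemma insertNth_mem_unitCube {n : ℕ} {i : Fin (n + 1)} {s : ℝ} {y : Fin n → ℝ} :
    i.insertNth s y ∈ unitCube (n + 1) ↔ s ∈ Icc 0 1 ∧ y ∈ unitCube n :=
  Fin.insertNth_mem_Icc

lemma continuous_uComp {d : ℕ} {f : (Fin d → ℝ) → ℝ} (hf : Continuous f) (i : Fin d) :
    Continuous (uComp f i) :=
  hf.sub <| intervalIntegral.continuous_parametric_intervalIntegral_of_continuous'
    (f := fun x t => f (Function.update x i t)) (hf.comp (continuous_fst.update i continuous_snd))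
    0 1

section Slices

variable {n : ℕ} {f : (Fin (n + 1) → ℝ) → ℝ} (i : Fin (n + 1))

lemma pderivI_insertNth (s : ℝ) (y : Fin n → ℝ) :
    pderivI f i (i.insertNth s y) = deriv (fun t => f (i.insertNth t y)) s := by
  simp only [pderivI, Fin.update_insertNth, Fin.insertNth_apply_same]

lemma integral_sq_uComp_insertNth (hf : Continuous f) (y : Fin n → ℝ) :
    ∫ s in Icc 0 1, uComp f i (i.insertNth s y) ^ 2 =
      Var[fun s => f (i.insertNth s y); volume.restrict (Icc 0 1)] := by
  have hslice : Continuous fun s : ℝ => f (i.insertNth s y) :=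
    hf.comp (differentiable_insertNth i y).continuous
  simp only [uComp, Fin.update_insertNth, intervalIntegral.integral_of_le zero_le_one,
    ← integral_Icc_eq_integral_Ioc]
  exact (variance_eq_integral hslice.aemeasurable).symm

lemma variance_slice_mem_Icc {c C : ℝ} (hf : Differentiable ℝ f) (hc : 0 ≤ c)
    (hbound : ∀ x ∈ unitCube (n + 1), |pderivI f i x| ∈ Icc c C) {y : Fin n → ℝ}
    (hy : y ∈ unitCube n) :
    Var[fun s => f (i.insertNth s y); volume.restrict (Icc 0 1)] ∈
      Icc (c ^ 2 / 12) (C ^ 2 / 12) :=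
  variance_mem_Icc_of_abs_deriv_mem_Icc (hf.comp (differentiable_insertNth i y)) hc
    fun s hs => pderivI_insertNth i s y ▸ hbound _ (insertNth_mem_unitCube.2 ⟨hs, hy⟩)

end Slices

lemma DTot_mem_Icc {d : ℕ} {f : (Fin d → ℝ) → ℝ} {i : Fin d} {c C : ℝ}
    (hf : Differentiable ℝ f) (hc : 0 ≤ c)
    (hbound : ∀ x ∈ unitCube d, |pderivI f i x| ∈ Icc c C) :
    DTot f i ∈ Icc (c ^ 2 / 12) (C ^ 2 / 12) := by
  obtain ⟨n, rfl⟩ : ∃ n, d = n + 1 := ⟨d - 1, by have := i.pos; omega⟩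
  have hint : Integrable (fun x => uComp f i x ^ 2) (volume.restrict (unitCube (n + 1))) :=
    ((continuous_uComp hf.continuous i).pow 2).continuousOn.integrableOn_compact isCompact_Icc
  have hcube : ∀ᵐ y ∂volume.restrict (unitCube n), y ∈ unitCube n :=
    ae_restrict_mem measurableSet_Icc
  rw [volume_restrict_unitCube] at hint hcube
  have hslices := hint.integral_insertNth _ i
  rw [DTot, volume_restrict_unitCube, integral_pi_eq_integral_integral_insertNth _ i hint]
  simp only [integral_sq_uComp_insertNth i hf.continuous] at hslices ⊢
  refine (convex_Icc _ _).integral_mem isClosed_Icc ?_ hslices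
  filter_upwards [hcube] with y hy using variance_slice_mem_Icc i hf hc hbound hy

theorem dgsm_constant_bounds_general (d : ℕ) (f : (Fin d → ℝ) → ℝ) (hf : ContDiff ℝ 1 f)
    (i : Fin d) (c C : ℝ) (hc : 0 ≤ c)
    (hlow : ∀ x ∈ unitCube d, c ≤ |pderivI f i x|)
    (hupp : ∀ x ∈ unitCube d, |pderivI f i x| ≤ C)
    (hD : 0 < totVar f) :
    c ^ 2 / (12 * totVar f) ≤ STot f i ∧ STot f i ≤ C ^ 2 / (12 * totVar f) := by
  obtain ⟨hDTot_low, hDTot_upp⟩ :=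
    DTot_mem_Icc (hf.differentiable one_ne_zero) hc fun x hx => ⟨hlow x hx, hupp x hx⟩
  rw [STot, ← div_div, ← div_div]
  exact ⟨div_le_div_of_nonneg_right hDTot_low hD.le, div_le_div_of_nonneg_right hDTot_upp hD.le⟩

/-- **Theorem 1 (Sobol'–Kucherenko).** If `c ≤ |∂f/∂x_i| ≤ C` on `[0,1]^d` and the total
variance `D` is positive, then `c²/(12D) ≤ S_i^tot ≤ C²/(12D)`. -/
theorem dgsm_constant_bounds (d : ℕ) (f : (Fin d → ℝ) → ℝ) (hf : ContDiff ℝ 1 f)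
    (i : Fin d) (c C : ℝ) (hc : 0 ≤ c) (hC : 0 ≤ C)
    (hlow : ∀ x ∈ unitCube d, c ≤ |pderivI f i x|)
    (hupp : ∀ x ∈ unitCube d, |pderivI f i x| ≤ C)
    (hD : 0 < totVar f) :
    c ^ 2 / (12 * totVar f) ≤ STot f i ∧ STot f i ≤ C ^ 2 / (12 * totVar f) :=
  dgsm_constant_bounds_general d f hf i c C hc hlow hupp hD
end
end

section
/- For every continuously differentiable u : [0,1] → ℝ, ∫₀¹ u(x)² dx − (∫₀¹ u(x) dx)² ≤ (1/2)∫₀¹ x(1−x) u′(x)² dx (and the left-hand side is nonnegative); equivalently, the variance of u on [0,1] is bounded by the weighted Dirichlet integral with weight x(1−x)/2. -/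
/-!
Symmetrising, `2 Var u = ∬ (u x - u y)²` over the unit square. By Cauchy–Schwarz (itself the
nonnegativity of the same symmetrised double integral), `(u x - u y)² ≤ (x - y) (H x - H y)`,
where `H` is a primitive of `u'²`. Symmetrising back, `∬ (x - y) (H x - H y) = ∫ (2x - 1) H`,
and integrating by parts against `x² - x`, which vanishes at both endpoints, gives
`∫ x (1 - x) u'²`.
-/

open MeasureTheory Real

section FiniteMeasure

variable {α : Type*} [MeasurableSpace α] {μ : Measure α} [IsFiniteMeasure μ] {f g : α → ℝ}

theorem integral_integral_sub_mul_sub (hf : Integrable f μ) (hg : Integrable g μ)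
    (hfg : Integrable (fun x => f x * g x) μ) :
    ∫ x, ∫ y, (f x - f y) * (g x - g y) ∂μ ∂μ =
      2 * (μ.real Set.univ * ∫ x, f x * g x ∂μ - (∫ x, f x ∂μ) * ∫ x, g x ∂μ) := by
  have inner : ∀ x, ∫ y, (f x - f y) * (g x - g y) ∂μ =
      μ.real Set.univ * (f x * g x) - f x * ∫ y, g y ∂μ - g x * ∫ y, f y ∂μ +
        ∫ y, f y * g y ∂μ := by
    intro x
    have e : (fun y => (f x - f y) * (g x - g y)) =
        fun y => f x * g x - f x * g y - g x * f y + f y * g y := by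
      funext y; ring
    rw [e, integral_add (by fun_prop) hfg, integral_sub (by fun_prop) (by fun_prop),
      integral_sub (by fun_prop) (by fun_prop), integral_const, integral_const_mul,
      integral_const_mul, smul_eq_mul]
  simp_rw [inner]
  rw [integral_add (by fun_prop) (by fun_prop), integral_sub (by fun_prop) (by fun_prop),
    integral_sub (by fun_prop) (by fun_prop), integral_const, integral_const_mul,
    integral_mul_const, integral_mul_const, smul_eq_mul]
  ring

theorem sq_integral_le_measureReal_univ_mul_integral_sq (hf : Integrable f μ)
    (hf2 : Integrable (fun x => f x ^ 2) μ) :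
    (∫ x, f x ∂μ) ^ 2 ≤ μ.real Set.univ * ∫ x, f x ^ 2 ∂μ := by
  have h := integral_integral_sub_mul_sub hf hf (by simpa only [sq] using hf2)
  have hnonneg : 0 ≤ ∫ x, ∫ y, (f x - f y) * (f x - f y) ∂μ ∂μ :=
    integral_nonneg fun x => integral_nonneg fun y => mul_self_nonneg _
  simp only [← sq] at h hnonneg
  linarith

end FiniteMeasure

theorem sq_intervalIntegral_le_mul_intervalIntegral_sq {f : ℝ → ℝ} {a b : ℝ}
    (hf : IntervalIntegrable f volume a b)
    (hf2 : IntervalIntegrable (fun t => f t ^ 2) volume a b) :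
    (∫ t in a..b, f t) ^ 2 ≤ (b - a) * ∫ t in a..b, f t ^ 2 := by
  wlog hab : a ≤ b generalizing a b
  · have h := this hf.symm hf2.symm (le_of_not_ge hab)
    rw [intervalIntegral.integral_symm b a, intervalIntegral.integral_symm b a, neg_sq]
    linarith
  simpa [intervalIntegral.integral_of_le hab, hab] using
    sq_integral_le_measureReal_univ_mul_integral_sq hf.1 hf2.1

theorem sq_sub_le_mul_intervalIntegral_sq {u u' : ℝ → ℝ} {a b : ℝ}
    (hu : ∀ t ∈ Set.uIcc a b, HasDerivAt u (u' t) t) (hu' : IntervalIntegrable u' volume a b)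
    (hu'2 : IntervalIntegrable (fun t => u' t ^ 2) volume a b) :
    (u b - u a) ^ 2 ≤ (b - a) * ∫ t in a..b, u' t ^ 2 := by
  rw [← intervalIntegral.integral_eq_sub_of_hasDerivAt hu hu']
  exact sq_intervalIntegral_le_mul_intervalIntegral_sq hu' hu'2

theorem setIntegral_setIntegral_mono_of_continuous {X : Type*} [TopologicalSpace X]
    [MeasurableSpace X] [OpensMeasurableSpace X] [T2Space X] [FirstCountableTopology X]
    [LocallyCompactSpace X] {μ : Measure X} [IsFiniteMeasureOnCompacts μ]
    {F G : X → X → ℝ} {s : Set X} (hs : IsCompact s) (hF : Continuous F.uncurry)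
    (hG : Continuous G.uncurry) (hFG : ∀ x y, F x y ≤ G x y) :
    ∫ x in s, ∫ y in s, F x y ∂μ ∂μ ≤ ∫ x in s, ∫ y in s, G x y ∂μ ∂μ := by
  have hint : ∀ {K : X → X → ℝ}, Continuous K.uncurry → ∀ x, IntegrableOn (K x) s μ :=
    fun hK x => (hK.comp (Continuous.prodMk_right x)).continuousOn.integrableOn_compact hs
  exact integral_mono
    ((continuous_parametric_integral_of_continuous hF hs).continuousOn.integrableOn_compact hs)
    ((continuous_parametric_integral_of_continuous hG hs).continuousOn.integrableOn_compact hs)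
    fun x => integral_mono (hint hF x) (hint hG x) (hFG x)

theorem intervalIntegral_mul_two_mul_sub_one_eq {H g : ℝ → ℝ}
    (hH : ∀ x ∈ Set.uIcc (0 : ℝ) 1, HasDerivAt H (g x) x)
    (hg : IntervalIntegrable g volume 0 1) :
    ∫ x in (0 : ℝ)..1, H x * (2 * x - 1) = ∫ x in (0 : ℝ)..1, x * (1 - x) * g x := by
  have hv : ∀ x ∈ Set.uIcc (0 : ℝ) 1, HasDerivAt (fun t => t ^ 2 - t) (2 * x - 1) x :=
    fun x _ => by simpa [Pi.sub_def] using (hasDerivAt_pow 2 x).sub (hasDerivAt_id' x)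
  rw [intervalIntegral.integral_mul_deriv_eq_deriv_mul hH hv hg
    ((by fun_prop : Continuous fun x : ℝ => 2 * x - 1).intervalIntegrable 0 1)]
  simp only [one_pow, sub_self, mul_zero, ne_eq, OfNat.ofNat_ne_zero, not_false_eq_true, zero_pow,
    zero_sub]
  rw [← intervalIntegral.integral_neg]
  congr 1; ext x; ring

theorem setIntegral_setIntegral_sub_mul_sub_eq_weighted {H g : ℝ → ℝ}
    (hH : ∀ x ∈ Set.Icc (0 : ℝ) 1, HasDerivAt H (g x) x)
    (hg : IntervalIntegrable g volume 0 1) :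
    ∫ x in Set.Icc (0 : ℝ) 1, ∫ y in Set.Icc (0 : ℝ) 1, (x - y) * (H x - H y) =
      ∫ x in Set.Icc (0 : ℝ) 1, x * (1 - x) * g x := by
  have hHc : ContinuousOn H (Set.Icc 0 1) := fun x hx => (hH x hx).continuousAt.continuousWithinAt
  have hint : ∀ {f : ℝ → ℝ}, ContinuousOn f (Set.Icc 0 1) →
      IntegrableOn f (Set.Icc 0 1) :=
    fun hf => hf.integrableOn_compact isCompact_Icc
  have hx : ∫ x in Set.Icc (0 : ℝ) 1, x = 1 / 2 := by
    rw [integral_Icc_eq_integral_Ioc, ← intervalIntegral.integral_of_le zero_le_one]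
    norm_num
  have hxH : IntegrableOn (fun x => x * H x) (Set.Icc 0 1) := hint (continuousOn_id.mul hHc)
  rw [integral_integral_sub_mul_sub (f := fun x => x) (hint continuousOn_id) (hint hHc) hxH, hx]
  have hibp := intervalIntegral_mul_two_mul_sub_one_eq
    (fun x hx => hH x (by rwa [Set.uIcc_of_le zero_le_one] at hx)) hg
  simp only [intervalIntegral.integral_of_le zero_le_one, ← integral_Icc_eq_integral_Ioc] at hibp
  have hsplit : ∫ x in Set.Icc (0 : ℝ) 1, H x * (2 * x - 1) =
      2 * (∫ x in Set.Icc (0 : ℝ) 1, x * H x) - ∫ x in Set.Icc (0 : ℝ) 1, H x := by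
    have e : (fun x : ℝ => H x * (2 * x - 1)) = fun x => 2 * (x * H x) - H x := by ext x; ring
    rw [e, integral_sub (hxH.const_mul 2) (hint hHc), integral_const_mul]
  simp only [measureReal_restrict_apply_univ, Real.volume_real_Icc_of_le zero_le_one]
  rw [← hibp, hsplit]
  ring

/-- **Hardy–Littlewood–Pólya weighted Poincaré inequality.** For a continuously
differentiable `u : [0,1] → ℝ`, the variance of `u` on `[0,1]` is nonnegative and bounded
by the weighted Dirichlet integral `1/2 ∫₀¹ x(1−x) u′(x)² dx`. -/
theorem variance_le_weighted_dirichlet (u : ℝ → ℝ) (hu : ContDiff ℝ 1 u) :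
    0 ≤ (∫ x in Set.Icc (0:ℝ) 1, (u x) ^ 2) - (∫ x in Set.Icc (0:ℝ) 1, u x) ^ 2 ∧
      (∫ x in Set.Icc (0:ℝ) 1, (u x) ^ 2) - (∫ x in Set.Icc (0:ℝ) 1, u x) ^ 2 ≤
        (1 / 2) * ∫ x in Set.Icc (0:ℝ) 1, x * (1 - x) * (deriv u x) ^ 2 := by
  have hu' : Continuous (deriv u) := hu.continuous_deriv le_rfl
  have hdu : ∀ x, HasDerivAt u (deriv u x) x :=
    fun x => (hu.differentiable one_ne_zero x).hasDerivAt
  have hu'2 : Continuous fun t => deriv u t ^ 2 := by fun_prop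
  set H : ℝ → ℝ := fun x => ∫ t in (0 : ℝ)..x, deriv u t ^ 2
  have hH : ∀ x, HasDerivAt H (deriv u x ^ 2) x :=
    fun x => (hu'2.integral_hasStrictDerivAt 0 x).hasDerivAt
  have hHc : Continuous H := continuous_iff_continuousAt.2 fun x => (hH x).continuousAt
  have hvar : ∫ x in Set.Icc (0 : ℝ) 1, ∫ y in Set.Icc (0 : ℝ) 1, (u x - u y) ^ 2 =
      2 * ((∫ x in Set.Icc (0:ℝ) 1, u x ^ 2) - (∫ x in Set.Icc (0:ℝ) 1, u x) ^ 2) := by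
    simpa [← sq] using integral_integral_sub_mul_sub (μ := volume.restrict (Set.Icc (0 : ℝ) 1))
      hu.continuous.integrableOn_Icc hu.continuous.integrableOn_Icc
      (hu.continuous.mul hu.continuous).integrableOn_Icc
  have hpointwise : ∀ x y, (u x - u y) ^ 2 ≤ (x - y) * (H x - H y) := fun x y => by
    rw [intervalIntegral.integral_interval_sub_left (hu'2.intervalIntegrable _ _)
      (hu'2.intervalIntegrable _ _)]
    exact sq_sub_le_mul_intervalIntegral_sq (fun t _ => hdu t) (hu'.intervalIntegrable _ _)
      (hu'2.intervalIntegrable _ _)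
  have hmono : ∫ x in Set.Icc (0 : ℝ) 1, ∫ y in Set.Icc (0 : ℝ) 1, (u x - u y) ^ 2 ≤
      ∫ x in Set.Icc (0 : ℝ) 1, ∫ y in Set.Icc (0 : ℝ) 1, (x - y) * (H x - H y) :=
    setIntegral_setIntegral_mono_of_continuous isCompact_Icc (by fun_prop) (by fun_prop)
      hpointwise
  have hweight := setIntegral_setIntegral_sub_mul_sub_eq_weighted (fun x _ => hH x)
    (hu'2.intervalIntegrable 0 1)
  have hnonneg :
      0 ≤ ∫ x in Set.Icc (0 : ℝ) 1, ∫ y in Set.Icc (0 : ℝ) 1, (u x - u y) ^ 2 :=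
    integral_nonneg fun x => integral_nonneg fun y => sq_nonneg _
  constructor <;> linarith
end

section
/- Fix i and suppose the i-th input is Gaussian with variance σ_i² > 0. Assume f ∈ L²(μ), ∂f/∂x_i ∈ L²(μ), and D > 0. Then σ_i² w_i² / D ≤ S_i^tot, where w_i = ∫_{ℝ^d} (∂f/∂x_i) dμ. -/
/-!
Fix the coordinates other than `x_i`. Along the line `t ↦ x[i := t]` the function
`u_i(x[i := t]) = f(x[i := t]) - ∫ f(x[i := s]) dμ_i(s)` has derivative `∂f/∂x_i`, so Stein's
identity for `μ_i = N(m_i, σ_i²)` gives `σ_i² ∫ ∂f/∂x_i dμ_i = ∫ (t - m_i) u_i dμ_i`.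
Integrating over the other coordinates, `σ_i² w_i = ∫ (x_i - m_i) u_i dμ`, and Cauchy–Schwarz
with `∫ (x_i - m_i)² dμ = σ_i²` yields `σ_i⁴ w_i² ≤ σ_i² D_i^tot`.
-/

open MeasureTheory ProbabilityTheory
open scoped NNReal

noncomputable section

/-- `u_i(x) = f(x) − ∫_ℝ f(x₁,…,x_{i−1},t,x_{i+1},…,x_d) dμ_i(t)`, the sum of all ANOVA
terms of `f` depending on `x_i`, for independent inputs with marginal laws `μs j`. -/
def uCompM {d : ℕ} (μs : Fin d → Measure ℝ) (f : (Fin d → ℝ) → ℝ) (i : Fin d)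
    (x : Fin d → ℝ) : ℝ :=
  f x - ∫ t, f (Function.update x i t) ∂(μs i)

/-- The total variance `D = ∫ f² dμ − (∫ f dμ)²` with respect to the product measure. -/
def totVarM {d : ℕ} (μs : Fin d → Measure ℝ) (f : (Fin d → ℝ) → ℝ) : ℝ :=
  (∫ x, (f x) ^ 2 ∂(Measure.pi μs)) - (∫ x, f x ∂(Measure.pi μs)) ^ 2

/-- The total partial variance `D_i^tot = ∫ u_i² dμ`. -/
def DTotM {d : ℕ} (μs : Fin d → Measure ℝ) (f : (Fin d → ℝ) → ℝ) (i : Fin d) : ℝ :=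
  ∫ x, (uCompM μs f i x) ^ 2 ∂(Measure.pi μs)

/-- The total Sobol' sensitivity index `S_i^tot = D_i^tot / D`. -/
def STotM {d : ℕ} (μs : Fin d → Measure ℝ) (f : (Fin d → ℝ) → ℝ) (i : Fin d) : ℝ :=
  DTotM μs f i / totVarM μs f

/-- The DGSM `ν_i = ∫ (∂f/∂x_i)² dμ`. -/
def nuM {d : ℕ} (μs : Fin d → Measure ℝ) (f : (Fin d → ℝ) → ℝ) (i : Fin d) : ℝ :=
  ∫ x, (pderivI f i x) ^ 2 ∂(Measure.pi μs)

/-- The DGSM `w_i = ∫ (∂f/∂x_i) dμ`. -/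
def wM {d : ℕ} (μs : Fin d → Measure ℝ) (f : (Fin d → ℝ) → ℝ) (i : Fin d) : ℝ :=
  ∫ x, pderivI f i x ∂(Measure.pi μs)

section CauchySchwarz

variable {α : Type*} [MeasurableSpace α] {μ : Measure α}

theorem sq_integral_mul_le_integral_sq_mul_integral_sq {g h : α → ℝ} (hg : MemLp g 2 μ)
    (hh : MemLp h 2 μ) :
    (∫ a, g a * h a ∂μ) ^ 2 ≤ (∫ a, g a ^ 2 ∂μ) * ∫ a, h a ^ 2 ∂μ := by
  have key := real_inner_mul_inner_self_le (hg.toLp g) (hh.toLp h)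
  simp only [L2.inner_def, RCLike.inner_apply, conj_trivial] at key
  have hgh : ∫ a, hh.toLp h a * hg.toLp g a ∂μ = ∫ a, g a * h a ∂μ := integral_congr_ae <| by
    filter_upwards [hg.coeFn_toLp, hh.coeFn_toLp] with a hga hha
    rw [hga, hha, mul_comm]
  have hgg : ∫ a, hg.toLp g a * hg.toLp g a ∂μ = ∫ a, g a ^ 2 ∂μ := integral_congr_ae <| by
    filter_upwards [hg.coeFn_toLp] with a hga
    rw [hga, sq]
  have hhh : ∫ a, hh.toLp h a * hh.toLp h a ∂μ = ∫ a, h a ^ 2 ∂μ := integral_congr_ae <| by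
    filter_upwards [hh.coeFn_toLp] with a hha
    rw [hha, sq]
  rwa [hgh, hgg, hhh, ← sq] at key

theorem sq_integral_le_integral_sq [IsProbabilityMeasure μ] {g : α → ℝ} (hg : MemLp g 2 μ) :
    (∫ a, g a ∂μ) ^ 2 ≤ ∫ a, g a ^ 2 ∂μ := by
  simpa using sq_integral_mul_le_integral_sq_mul_integral_sq hg (memLp_const (1 : ℝ))

end CauchySchwarz

namespace ProbabilityTheory

variable {m : ℝ} {v : ℝ≥0}

lemma memLp_sub_gaussianReal {p : ENNReal} (hp : p ≠ ⊤) :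
    MemLp (fun t => t - m) p (gaussianReal m v) :=
  (memLp_id_gaussianReal' p hp).sub (memLp_const m)

lemma integral_sub_sq_gaussianReal : ∫ t, (t - m) ^ 2 ∂gaussianReal m v = v := by
  simpa [integral_id_gaussianReal] using
    (variance_eq_integral measurable_id.aemeasurable).symm.trans
      (variance_id_gaussianReal (μ := m) (v := v))

lemma integrable_gaussianReal_iff (hv : v ≠ 0) {g : ℝ → ℝ} :
    Integrable g (gaussianReal m v) ↔ Integrable (fun t => gaussianPDFReal m v t • g t) := by
  simp only [gaussianReal_of_var_ne_zero m hv, integrable_withDensity_iff_integrable_smul'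
    (measurable_gaussianPDF m v) (ae_of_all _ fun _ => gaussianPDF_lt_top), toReal_gaussianPDF]

lemma hasDerivAt_gaussianPDFReal (t : ℝ) :
    HasDerivAt (gaussianPDFReal m v) (-((t - m) / v) * gaussianPDFReal m v t) t := by
  have h : HasDerivAt (fun x => -(x - m) ^ 2 / (2 * (v : ℝ))) (-(2 * (t - m)) / (2 * v)) t := by
    simpa using (((hasDerivAt_id t).sub_const m).fun_pow 2).neg.div_const (2 * (v : ℝ))
  refine (h.exp.const_mul _).congr_deriv ?_
  rw [gaussianPDFReal]
  ring

/-- Integrate `(v φ g)' = φ (v g' - (t - m) g)` over `ℝ`, `φ` the Gaussian density. -/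
theorem stein_identity_gaussianReal (hv : v ≠ 0) {g g' : ℝ → ℝ} (hg' : ∀ t, HasDerivAt g (g' t) t)
    (hg : Integrable g (gaussianReal m v)) (hg'i : Integrable g' (gaussianReal m v))
    (hmul : Integrable (fun t => (t - m) * g t) (gaussianReal m v)) :
    (v : ℝ) * ∫ t, g' t ∂gaussianReal m v = ∫ t, (t - m) * g t ∂gaussianReal m v := by
  set h : ℝ → ℝ := fun t => v * g' t - (t - m) * g t
  have hh : Integrable h (gaussianReal m v) := (hg'i.const_mul _).sub hmul
  have hderiv : ∀ t, HasDerivAt (fun t => v * (gaussianPDFReal m v t * g t))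
      (gaussianPDFReal m v t • h t) t := fun t => by
    refine (((hasDerivAt_gaussianPDFReal t).mul (hg' t)).const_mul (v : ℝ)).congr_deriv ?_
    have hv' : (v : ℝ) ≠ 0 := NNReal.coe_ne_zero.2 hv
    simp only [h, smul_eq_mul]
    field_simp
    ring
  have hzero : ∫ t, h t ∂gaussianReal m v = 0 := by
    rw [integral_gaussianReal_eq_integral_smul hv]
    exact integral_eq_zero_of_hasDerivAt_of_integrable hderiv
      ((integrable_gaussianReal_iff hv).1 hh)
      (((integrable_gaussianReal_iff hv).1 hg).const_mul _)
  rwa [integral_sub (hg'i.const_mul _) hmul, integral_const_mul, sub_eq_zero] at hzero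

end ProbabilityTheory

namespace MeasureTheory

section Prod

variable {α β : Type*} [MeasurableSpace α] [MeasurableSpace β] {μ : Measure α} {ν : Measure β}
  [SFinite ν] {G : α × β → ℝ}

theorem MemLp.ae_memLp_two_prodMk_left [SFinite μ] (hG : MemLp G 2 (μ.prod ν)) :
    ∀ᵐ x ∂μ, MemLp (fun y => G (x, y)) 2 ν := by
  filter_upwards [hG.1.prodMk_left, hG.integrable_sq.prod_right_ae] with x hx hx2
  exact (memLp_two_iff_integrable_sq hx).2 hx2

theorem MemLp.integral_prod_right_two [SFinite μ] [IsProbabilityMeasure ν]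
    (hG : MemLp G 2 (μ.prod ν)) : MemLp (fun x => ∫ y, G (x, y) ∂ν) 2 μ := by
  have hmeas := hG.1.integral_prod_right'
  refine (memLp_two_iff_integrable_sq hmeas).2 <|
    hG.integrable_sq.integral_prod_left.mono' (hmeas.pow 2) ?_
  filter_upwards [hG.ae_memLp_two_prodMk_left] with x hx
  rw [Real.norm_eq_abs, abs_of_nonneg (sq_nonneg _)]
  exact sq_integral_le_integral_sq hx

end Prod

section Update

variable {ι : Type*} [Fintype ι] [DecidableEq ι] {α : ι → Type*} [∀ j, MeasurableSpace (α j)]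
  (μ : ∀ j, Measure (α j)) [∀ j, SigmaFinite (μ j)] (i : ι) [IsProbabilityMeasure (μ i)]

theorem measurePreserving_update :
    MeasurePreserving (fun p : (∀ j, α j) × α i => Function.update p.1 i p.2)
      ((Measure.pi μ).prod (μ i)) (Measure.pi μ) := by
  refine ⟨measurable_update', (Measure.pi_eq fun s hs => ?_).symm⟩
  have hpre : (fun p : (∀ j, α j) × α i => Function.update p.1 i p.2) ⁻¹' Set.univ.pi s =
      Set.univ.pi (Function.update s i Set.univ) ×ˢ s i := by
    ext ⟨x, t⟩
    simp only [Set.mem_preimage, Set.mem_univ_pi, Set.mem_prod, Function.forall_update_iff]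
    rw [Function.forall_update_iff (p := fun j S => x j ∈ S)]
    simp only [Set.mem_univ, true_and]
    exact and_comm
  rw [Measure.map_apply measurable_update' (.univ_pi hs), hpre, Measure.prod_prod, Measure.pi_pi,
    ← Finset.prod_erase_mul _ _ (Finset.mem_univ i),
    ← Finset.prod_erase_mul _ _ (Finset.mem_univ i)]
  simp only [Function.update_self, measure_univ, mul_one]
  congr 1
  exact Finset.prod_congr rfl fun j hj => by rw [Function.update_of_ne (Finset.ne_of_mem_erase hj)]

variable {μ}

theorem integral_eq_integral_integral_update {E : Type*} [NormedAddCommGroup E] [NormedSpace ℝ E]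
    {F : (∀ j, α j) → E} (hF : Integrable F (Measure.pi μ)) :
    ∫ x, F x ∂Measure.pi μ = ∫ x, ∫ t, F (Function.update x i t) ∂μ i ∂Measure.pi μ := by
  have hmp := measurePreserving_update μ i
  calc ∫ x, F x ∂Measure.pi μ
      = ∫ p, F (Function.update p.1 i p.2) ∂(Measure.pi μ).prod (μ i) := by
        conv_lhs => rw [← hmp.map_eq]
        exact integral_map hmp.measurable.aemeasurable (by rw [hmp.map_eq]; exact hF.1)
    _ = _ := integral_prod _ (hmp.integrable_comp_of_integrable hF)

theorem MemLp.ae_memLp_two_update {F : (∀ j, α j) → ℝ} (hF : MemLp F 2 (Measure.pi μ)) :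
    ∀ᵐ x ∂Measure.pi μ, MemLp (fun t => F (Function.update x i t)) 2 (μ i) :=
  (hF.comp_measurePreserving (measurePreserving_update μ i)).ae_memLp_two_prodMk_left

theorem MemLp.integral_update_two {F : (∀ j, α j) → ℝ} (hF : MemLp F 2 (Measure.pi μ)) :
    MemLp (fun x => ∫ t, F (Function.update x i t) ∂μ i) 2 (Measure.pi μ) :=
  (hF.comp_measurePreserving (measurePreserving_update μ i)).integral_prod_right_two

end Update

end MeasureTheory

section DGSM

variable {d : ℕ} {μs : Fin d → Measure ℝ} {i : Fin d}
  {f : (Fin d → ℝ) → ℝ} {m : ℝ} {v : ℝ≥0}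

lemma pderivI_update (x : Fin d → ℝ) (t : ℝ) :
    pderivI f i (Function.update x i t) = deriv (fun s => f (Function.update x i s)) t := by
  simp [pderivI]

lemma uCompM_update (x : Fin d → ℝ) (t : ℝ) :
    uCompM μs f i (Function.update x i t) =
      f (Function.update x i t) - ∫ s, f (Function.update x i s) ∂μs i := by
  simp [uCompM]

variable [∀ j, IsProbabilityMeasure (μs j)]

lemma memLp_uCompM (hf : MemLp f 2 (Measure.pi μs)) : MemLp (uCompM μs f i) 2 (Measure.pi μs) :=
  hf.sub (hf.integral_update_two i)

lemma memLp_apply_sub_of_eq_gaussianReal (hμi : μs i = gaussianReal m v) :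
    MemLp (fun x : Fin d → ℝ => x i - m) 2 (Measure.pi μs) := by
  have h := memLp_sub_gaussianReal (m := m) (v := v) (p := 2) ENNReal.ofNat_ne_top
  rw [← hμi] at h
  exact h.comp_measurePreserving (measurePreserving_eval μs i)

theorem mul_wM_eq_integral_mul_uCompM (hv : v ≠ 0) (hμi : μs i = gaussianReal m v)
    (hf : Differentiable ℝ f) (hfL2 : MemLp f 2 (Measure.pi μs))
    (hdL2 : MemLp (pderivI f i) 2 (Measure.pi μs)) :
    (v : ℝ) * wM μs f i = ∫ x, (x i - m) * uCompM μs f i x ∂Measure.pi μs := by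
  have hline : ∀ᵐ x ∂Measure.pi μs,
      (v : ℝ) * ∫ t, pderivI f i (Function.update x i t) ∂μs i =
        ∫ t, (Function.update x i t i - m) * uCompM μs f i (Function.update x i t) ∂μs i := by
    filter_upwards [hfL2.ae_memLp_two_update i, hdL2.ae_memLp_two_update i] with x hfx hdx
    simp only [pderivI_update, uCompM_update, Function.update_self] at hdx ⊢
    rw [hμi] at hfx hdx ⊢
    have hg := hfx.sub (memLp_const (∫ s, f (Function.update x i s) ∂gaussianReal m v))
    exact stein_identity_gaussianReal hv
      (fun t => ((hf _).comp t (hasDerivAt_update x i t).differentiableAt).hasDerivAt.sub_const _)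
      (hg.integrable one_le_two) (hdx.integrable one_le_two)
      ((memLp_sub_gaussianReal (p := 2) ENNReal.ofNat_ne_top).integrable_mul hg)
  calc (v : ℝ) * wM μs f i
      = ∫ x, (v : ℝ) * ∫ t, pderivI f i (Function.update x i t) ∂μs i ∂Measure.pi μs := by
        rw [wM, integral_eq_integral_integral_update i (hdL2.integrable one_le_two),
          integral_const_mul]
    _ = ∫ x, ∫ t, (Function.update x i t i - m) * uCompM μs f i (Function.update x i t) ∂μs i
          ∂Measure.pi μs := integral_congr_ae hline
    _ = ∫ x, (x i - m) * uCompM μs f i x ∂Measure.pi μs :=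
        (integral_eq_integral_integral_update i
          ((memLp_apply_sub_of_eq_gaussianReal hμi).integrable_mul (memLp_uCompM hfL2))).symm

theorem mul_sq_wM_le_DTotM (hv : v ≠ 0) (hμi : μs i = gaussianReal m v)
    (hf : Differentiable ℝ f) (hfL2 : MemLp f 2 (Measure.pi μs))
    (hdL2 : MemLp (pderivI f i) 2 (Measure.pi μs)) :
    (v : ℝ) * wM μs f i ^ 2 ≤ DTotM μs f i := by
  have hCS := sq_integral_mul_le_integral_sq_mul_integral_sq
    (memLp_apply_sub_of_eq_gaussianReal hμi) (memLp_uCompM (i := i) hfL2)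
  have hvar : ∫ x : Fin d → ℝ, (x i - m) ^ 2 ∂Measure.pi μs = v := by
    rw [integral_comp_eval (μ := μs) (f := fun t : ℝ => (t - m) ^ 2) (by fun_prop), hμi,
      integral_sub_sq_gaussianReal]
  rw [← mul_wM_eq_integral_mul_uCompM hv hμi hf hfL2 hdL2, hvar] at hCS
  refine le_of_mul_le_mul_left ?_ (by positivity : (0 : ℝ) < v)
  calc (v : ℝ) * (v * wM μs f i ^ 2) = (v * wM μs f i) ^ 2 := by ring
    _ ≤ v * DTotM μs f i := hCS

end DGSM

/-- **Theorem 6 (lower bound for a normal input).** For independent inputs where the `i`-th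
input is Gaussian with variance `σ_i² > 0`, and `f, ∂f/∂x_i ∈ L²(μ)` with `D > 0`, one has
`σ_i² w_i² / D ≤ S_i^tot`. -/
theorem dgsm_lower_bound_normal (d : ℕ) (μs : Fin d → Measure ℝ)
    (hprob : ∀ j, IsProbabilityMeasure (μs j)) (i : Fin d)
    (mi : ℝ) (v : ℝ≥0) (hv : v ≠ 0) (hμi : μs i = gaussianReal mi v)
    (f : (Fin d → ℝ) → ℝ) (hf : ContDiff ℝ 1 f)
    (hfL2 : MemLp f 2 (Measure.pi μs))
    (hdL2 : MemLp (pderivI f i) 2 (Measure.pi μs))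
    (hD : 0 < totVarM μs f) :
    (v : ℝ) * (wM μs f i) ^ 2 / totVarM μs f ≤ STotM μs f i :=
  div_le_div_of_nonneg_right
    (mul_sq_wM_le_DTotM (μs := μs) hv hμi (hf.differentiable one_ne_zero) hfL2 hdL2) hD.le
end
end

section
/- Fix i and suppose the i-th input is Gaussian with variance σ_i² > 0. Assume f ∈ L²(μ), ∂f/∂x_i ∈ L²(μ), D > 0, and that there are constants c, C ≥ 0 with c ≤ |∂f/∂x_i(x)| ≤ C for all x ∈ ℝ^d. Then σ_i² c² / D ≤ S_i^tot ≤ σ_i² C² / D. -/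
open MeasureTheory ProbabilityTheory
open scoped NNReal

noncomputable section

/-!
For fixed `x`, the section `g t = f (update x i t)` satisfies `c |s - t| ≤ |g s - g t| ≤ C |s - t|`.
Writing a variance as half the mean squared difference of two independent copies,
`2 Var g(T) = E (g T - g T')²`, this squeezes `Var g(T)` between `c² σ_i²` and `C² σ_i²`.
Since resampling the `i`-th coordinate preserves the product measure, `D_i^tot` is the average
over `x` of these section variances, so it lies between the same bounds.
-/

open scoped ENNReal

section Variance
variable {Ω : Type*} {mΩ : MeasurableSpace Ω} {ν : Measure Ω} [IsProbabilityMeasure ν]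

theorem integral_sq_sub_prod_eq_two_mul_variance {X : Ω → ℝ} (hX : MemLp X 2 ν) :
    ∫ p, (X p.1 - X p.2) ^ 2 ∂ν.prod ν = 2 * Var[X; ν] := by
  have hint : Integrable X ν := hX.integrable one_le_two
  have hmean : ∫ p, (X p.1 - X p.2) ∂ν.prod ν = 0 := by
    rw [integral_sub (hint.comp_fst ν) (hint.comp_snd ν), integral_fun_fst, integral_fun_snd,
      sub_self]
  have hsum := variance_add_prod hX hX.neg
  simp only [Pi.neg_apply, ← sub_eq_add_neg, variance_neg] at hsum
  rw [← variance_of_integral_eq_zero (by fun_prop) hmean, hsum, two_mul]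

theorem variance_le_variance_of_sq_sub_le {X Y : Ω → ℝ} (hX : MemLp X 2 ν) (hY : MemLp Y 2 ν)
    (h : ∀ a b, (X a - X b) ^ 2 ≤ (Y a - Y b) ^ 2) : Var[X; ν] ≤ Var[Y; ν] := by
  have hmono : ∫ p, (X p.1 - X p.2) ^ 2 ∂ν.prod ν ≤ ∫ p, (Y p.1 - Y p.2) ^ 2 ∂ν.prod ν :=
    integral_mono ((hX.comp_fst ν).sub (hX.comp_snd ν)).integrable_sq
      ((hY.comp_fst ν).sub (hY.comp_snd ν)).integrable_sq fun p => h p.1 p.2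
  rw [integral_sq_sub_prod_eq_two_mul_variance hX,
    integral_sq_sub_prod_eq_two_mul_variance hY] at hmono
  linarith

end Variance

section RealVariance
variable {ν : Measure ℝ} {g : ℝ → ℝ}

theorem sq_mul_variance_id_le_variance [IsProbabilityMeasure ν]
    (hν : MemLp id 2 ν) (hg : MemLp g 2 ν) {c : ℝ} (hc : 0 ≤ c)
    (h : ∀ s t, c * |s - t| ≤ |g s - g t|) : c ^ 2 * Var[id; ν] ≤ Var[g; ν] := by
  rw [← variance_const_mul]
  refine variance_le_variance_of_sq_sub_le (hν.const_mul c) hg fun s t => sq_le_sq.2 ?_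
  rw [id, id, ← mul_sub, abs_mul, abs_of_nonneg hc]
  exact h s t

theorem variance_le_sq_mul_variance_id [IsProbabilityMeasure ν]
    (hν : MemLp id 2 ν) (hg : MemLp g 2 ν) {C : ℝ}
    (h : ∀ s t, |g s - g t| ≤ C * |s - t|) : Var[g; ν] ≤ C ^ 2 * Var[id; ν] := by
  rw [← variance_const_mul]
  refine variance_le_variance_of_sq_sub_le hg (hν.const_mul C) fun s t => sq_le_sq.2 ?_
  rw [id, id, ← mul_sub, abs_mul]
  exact (h s t).trans (mul_le_mul_of_nonneg_right (le_abs_self C) (abs_nonneg _))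

theorem memLp_of_abs_sub_le_mul_abs_sub [IsFiniteMeasure ν] {p : ℝ≥0∞}
    (hν : MemLp id p ν) (hg : Continuous g) {C : ℝ}
    (h : ∀ s t, |g s - g t| ≤ C * |s - t|) : MemLp g p ν := by
  have hsub : MemLp (fun t => g t - g 0) p ν :=
    hν.of_le_mul (by fun_prop) (ae_of_all _ fun t => by simpa using h t 0)
  convert hsub.add (memLp_const (g 0)) using 1
  funext t
  simp

end RealVariance

theorem abs_sub_le_mul_abs_sub_of_abs_deriv_le {g : ℝ → ℝ} (hg : Differentiable ℝ g) {C : ℝ}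
    (h : ∀ t, |deriv g t| ≤ C) (s t : ℝ) : |g s - g t| ≤ C * |s - t| :=
  Convex.norm_image_sub_le_of_norm_deriv_le (fun x _ => hg x) (fun x _ => h x) convex_univ
    trivial trivial

theorem mul_abs_sub_le_abs_sub_of_le_deriv {g : ℝ → ℝ} (hg : Differentiable ℝ g) {c : ℝ}
    (h : ∀ t, c ≤ deriv g t) (s t : ℝ) : c * |s - t| ≤ |g s - g t| := by
  wlog hts : t ≤ s generalizing s t
  · rw [abs_sub_comm s, abs_sub_comm (g s)]
    exact this t s (le_of_not_ge hts)
  rw [abs_of_nonneg (sub_nonneg.2 hts)]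
  exact (mul_sub_le_image_sub_of_le_deriv hg h hts).trans (le_abs_self _)

/-- By Darboux's theorem a derivative bounded away from zero in absolute value has constant
sign, which reduces this to `mul_abs_sub_le_abs_sub_of_le_deriv` for `g` or `-g`. -/
theorem mul_abs_sub_le_abs_sub_of_le_abs_deriv {g : ℝ → ℝ} (hg : Differentiable ℝ g) {c : ℝ}
    (hc : 0 ≤ c) (h : ∀ t, c ≤ |deriv g t|) (s t : ℝ) : c * |s - t| ≤ |g s - g t| := by
  rcases hc.eq_or_lt with rfl | hc
  · simp
  have hne : ∀ x ∈ Set.univ, deriv g x ≠ 0 := fun x _ hx => by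
    simpa [hx] using hc.trans_le (h x)
  rcases hasDerivWithinAt_forall_lt_or_forall_gt_of_forall_ne convex_univ
    (fun x _ => (hg x).hasDerivAt.hasDerivWithinAt) hne with hneg | hpos
  · have hle : ∀ x, c ≤ deriv (fun y => -g y) x := fun x => by
      rw [deriv.fun_neg, ← abs_of_neg (hneg x trivial)]
      exact h x
    simpa only [Pi.neg_apply, neg_sub_neg, abs_sub_comm (g t)] using
      mul_abs_sub_le_abs_sub_of_le_deriv hg.neg hle s t
  · exact mul_abs_sub_le_abs_sub_of_le_deriv hg
      (fun x => abs_of_pos (hpos x trivial) ▸ h x) s t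

section Pi
variable {ι : Type*} [Fintype ι] [DecidableEq ι] {α : ι → Type*} [∀ j, MeasurableSpace (α j)]
  (μs : ∀ j, Measure (α j)) [∀ j, SigmaFinite (μs j)] (i : ι) [IsProbabilityMeasure (μs i)]

theorem lintegral_pi_eq_lintegral_lintegral_update {F : (∀ j, α j) → ℝ≥0∞} (hF : Measurable F) :
    ∫⁻ x, F x ∂Measure.pi μs = ∫⁻ x, ∫⁻ t, F (Function.update x i t) ∂μs i ∂Measure.pi μs := by
  simp_rw [← lmarginal_singleton]
  refine lintegral_eq_of_lmarginal_eq {i} hF (hF.lmarginal μs) ?_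
  ext x
  simp [lmarginal_singleton (∫⋯∫⁻_{i}, F ∂μs), lmarginal_update_of_mem]

/-- Stated with `eVar` and `∫⁻` so that no integrability of `x ↦ Var` is needed. -/
theorem integral_sq_sub_integral_update {F : (∀ j, α j) → ℝ} (hF : Measurable F) :
    ∫ x, (F x - ∫ t, F (Function.update x i t) ∂μs i) ^ 2 ∂Measure.pi μs =
      (∫⁻ x, eVar[fun t => F (Function.update x i t); μs i] ∂Measure.pi μs).toReal := by
  have hmean_meas : Measurable fun x => ∫ t, F (Function.update x i t) ∂μs i :=
    (hF.comp measurable_update').stronglyMeasurable.integral_prod_right'.measurable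
  have hsq_meas : Measurable fun x => (F x - ∫ t, F (Function.update x i t) ∂μs i) ^ 2 :=
    (hF.sub hmean_meas).pow_const 2
  rw [integral_eq_lintegral_of_nonneg_ae (ae_of_all _ fun x => sq_nonneg _)
    hsq_meas.aestronglyMeasurable,
    lintegral_pi_eq_lintegral_lintegral_update μs i hsq_meas.ennreal_ofReal]
  simp [evariance_eq_lintegral_ofReal]

end Pi

theorem toReal_lintegral_mem_Icc {α : Type*} [MeasurableSpace α] {μ : Measure α}
    [IsProbabilityMeasure μ] {f : α → ℝ≥0∞} {a b : ℝ} (hb : 0 ≤ b)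
    (h : ∀ x, f x ∈ Set.Icc (ENNReal.ofReal a) (ENNReal.ofReal b)) :
    (∫⁻ x, f x ∂μ).toReal ∈ Set.Icc a b := by
  have hlo : ENNReal.ofReal a ≤ ∫⁻ x, f x ∂μ := by
    simpa using lintegral_mono (μ := μ) fun x => (h x).1
  have hhi : ∫⁻ x, f x ∂μ ≤ ENNReal.ofReal b := by
    simpa using lintegral_mono (μ := μ) fun x => (h x).2
  exact ⟨(ENNReal.ofReal_le_iff_le_toReal (ne_top_of_le_ne_top ENNReal.ofReal_ne_top hhi)).1 hlo,
    ENNReal.toReal_le_of_le_ofReal hb hhi⟩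

theorem deriv_update_eq_pderivI {d : ℕ} (f : (Fin d → ℝ) → ℝ) (i : Fin d) (x : Fin d → ℝ)
    (t : ℝ) : deriv (fun s => f (Function.update x i s)) t = pderivI f i (Function.update x i t) := by
  simp [pderivI]

theorem dgsm_constant_bounds_normal_general (d : ℕ) (μs : Fin d → Measure ℝ)
    (hprob : ∀ j, IsProbabilityMeasure (μs j)) (i : Fin d)
    (mi : ℝ) (v : ℝ≥0) (hμi : μs i = gaussianReal mi v)
    (f : (Fin d → ℝ) → ℝ) (hf : ContDiff ℝ 1 f)
    (hD : 0 < totVarM μs f)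
    (c C : ℝ) (hc : 0 ≤ c)
    (hlow : ∀ x, c ≤ |pderivI f i x|) (hupp : ∀ x, |pderivI f i x| ≤ C) :
    (v : ℝ) * c ^ 2 / totVarM μs f ≤ STotM μs f i ∧
      STotM μs f i ≤ (v : ℝ) * C ^ 2 / totVarM μs f := by
  have hν : MemLp id 2 (μs i) := hμi ▸ memLp_id_gaussianReal 2
  have hid : Var[id; μs i] = v := hμi ▸ variance_id_gaussianReal
  have hsection : ∀ x, eVar[fun t => f (Function.update x i t); μs i] ∈
      Set.Icc (ENNReal.ofReal (v * c ^ 2)) (ENNReal.ofReal (v * C ^ 2)) := by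
    intro x
    have hg : Differentiable ℝ fun t => f (Function.update x i t) :=
      (hf.comp (contDiff_update 1 x i)).differentiable one_ne_zero
    have hlip := abs_sub_le_mul_abs_sub_of_abs_deriv_le hg
      fun t => deriv_update_eq_pderivI f i x t ▸ hupp _
    have hcolip := mul_abs_sub_le_abs_sub_of_le_abs_deriv hg hc
      fun t => deriv_update_eq_pderivI f i x t ▸ hlow _
    have hgL2 := memLp_of_abs_sub_le_mul_abs_sub hν hg.continuous hlip
    rw [← ofReal_variance hgL2, mul_comm (v : ℝ), mul_comm (v : ℝ), ← hid]
    exact ⟨ENNReal.ofReal_le_ofReal (sq_mul_variance_id_le_variance hν hgL2 hc hcolip),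
      ENNReal.ofReal_le_ofReal (variance_le_sq_mul_variance_id hν hgL2 hlip)⟩
  have hDtot : DTotM μs f i ∈ Set.Icc ((v : ℝ) * c ^ 2) (v * C ^ 2) := by
    simp only [DTotM, uCompM]
    rw [integral_sq_sub_integral_update μs i hf.continuous.measurable]
    exact toReal_lintegral_mem_Icc (by positivity) hsection
  exact ⟨div_le_div_of_nonneg_right hDtot.1 hD.le, div_le_div_of_nonneg_right hDtot.2 hD.le⟩

/-- **Theorem 7 (constant bounds for a normal input).** For independent inputs where the
`i`-th input is Gaussian with variance `σ_i² > 0`, if `f, ∂f/∂x_i ∈ L²(μ)`, `D > 0` and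
`c ≤ |∂f/∂x_i| ≤ C` everywhere, then `σ_i² c² / D ≤ S_i^tot ≤ σ_i² C² / D`. -/
theorem dgsm_constant_bounds_normal (d : ℕ) (μs : Fin d → Measure ℝ)
    (hprob : ∀ j, IsProbabilityMeasure (μs j)) (i : Fin d)
    (mi : ℝ) (v : ℝ≥0) (hv : v ≠ 0) (hμi : μs i = gaussianReal mi v)
    (f : (Fin d → ℝ) → ℝ) (hf : ContDiff ℝ 1 f)
    (hfL2 : MemLp f 2 (Measure.pi μs))
    (hdL2 : MemLp (pderivI f i) 2 (Measure.pi μs))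
    (hD : 0 < totVarM μs f)
    (c C : ℝ) (hc : 0 ≤ c) (hC : 0 ≤ C)
    (hlow : ∀ x, c ≤ |pderivI f i x|) (hupp : ∀ x, |pderivI f i x| ≤ C) :
    (v : ℝ) * c ^ 2 / totVarM μs f ≤ STotM μs f i ∧
      STotM μs f i ≤ (v : ℝ) * C ^ 2 / totVarM μs f :=
  dgsm_constant_bounds_normal_general d μs hprob i mi v hμi f hf hD c C hc hlow hupp
end
end

section
/- Fix i ∈ {1,…,d} and let a, b : [0,1]^d → ℝ be continuous functions that do not depend on the i-th coordinate (i.e. a(x) and b(x) are unchanged when the i-th coordinate of x is replaced by any t ∈ [0,1]). Let f(x) = a(x)·x_i + b(x). Then D_i^tot = (1/12)∫_{H^d} a(x)² dx, the DGSM ν_i = ∫_{H^d} a(x)² dx, and ς_i = (1/2)∫_{H^d} x_i(1−x_i) a(x)² dx = D_i^tot; in particular the upper bound UB2 is attained with equality: ς_i = D_i^tot. -/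
/-!
Along the `i`-th coordinate, `f` is the affine function `t ↦ a x * t + b x`, so `∂f/∂x_i = a`
and `u_i(x) = a(x) (x_i - 1/2)`. Since `a` does not depend on `x_i`, Fubini splits every integral
of the form `∫ g(x_i) a(x)² dx` as `(∫₀¹ g) · ∫ a²`, and the three indices reduce to
`∫₀¹ 1 = 1`, `∫₀¹ (t - 1/2)² = 1/12` and `(1/2) ∫₀¹ t (1 - t) = 1/12`.
-/

open MeasureTheory Real

noncomputable section

section LinearInCoordinate

variable {d : ℕ} {i : Fin d} {a b : (Fin d → ℝ) → ℝ}

theorem comp_update_linear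
    (hai : ∀ (x : Fin d → ℝ) (t : ℝ), a (Function.update x i t) = a x)
    (hbi : ∀ (x : Fin d → ℝ) (t : ℝ), b (Function.update x i t) = b x) (x : Fin d → ℝ) :
    (fun t => a (Function.update x i t) * Function.update x i t i + b (Function.update x i t)) =
      fun t => a x * t + b x := by
  funext t
  simp [hai, hbi]

theorem pderivI_linear
    (hai : ∀ (x : Fin d → ℝ) (t : ℝ), a (Function.update x i t) = a x)
    (hbi : ∀ (x : Fin d → ℝ) (t : ℝ), b (Function.update x i t) = b x) (x : Fin d → ℝ) :
    pderivI (fun x => a x * x i + b x) i x = a x := by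
  rw [pderivI, comp_update_linear hai hbi]
  simp

theorem uComp_linear
    (hai : ∀ (x : Fin d → ℝ) (t : ℝ), a (Function.update x i t) = a x)
    (hbi : ∀ (x : Fin d → ℝ) (t : ℝ), b (Function.update x i t) = b x) (x : Fin d → ℝ) :
    uComp (fun x => a x * x i + b x) i x = a x * (x i - 1 / 2) := by
  rw [uComp, comp_update_linear hai hbi, intervalIntegral.integral_add
    (intervalIntegral.intervalIntegrable_id.const_mul _) intervalIntegrable_const,
    intervalIntegral.integral_const_mul, integral_id, intervalIntegral.integral_const, smul_eq_mul]
  ring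

end LinearInCoordinate

theorem setIntegral_unitCube_mul_eq_insertNth {n : ℕ} (i : Fin (n + 1)) (g : ℝ → ℝ)
    {h : (Fin (n + 1) → ℝ) → ℝ}
    (hi : ∀ (x : Fin (n + 1) → ℝ) (t : ℝ), h (Function.update x i t) = h x) :
    ∫ x in unitCube (n + 1), g (x i) * h x =
      (∫ t in (0:ℝ)..1, g t) * ∫ y in Set.Icc (0 : Fin n → ℝ) 1, h (i.insertNth 0 y) := by
  set e := MeasurableEquiv.piFinSuccAbove (fun _ : Fin (n + 1) => ℝ) i
  have hcube :
      unitCube (n + 1) = e ⁻¹' (Set.Icc (0:ℝ) 1 ×ˢ Set.Icc (0 : Fin n → ℝ) 1) := by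
    ext x
    simp only [unitCube, Set.mem_Icc, Set.mem_preimage, Set.mem_prod, e,
      MeasurableEquiv.piFinSuccAbove_apply, Fin.insertNthEquiv_symm_apply, Pi.le_def,
      Fin.removeNth]
    rw [Fin.forall_iff_succAbove i, Fin.forall_iff_succAbove i]
    tauto
  have hcomp (x : Fin (n + 1) → ℝ) :
      g (e x).1 * h (i.insertNth 0 (e x).2) = g (x i) * h x := by
    simp only [e, MeasurableEquiv.piFinSuccAbove_apply, Fin.insertNthEquiv_symm_apply]
    rw [Fin.insertNth_removeNth, hi]
  rw [intervalIntegral.integral_of_le zero_le_one, ← integral_Icc_eq_integral_Ioc, hcube,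
    ← setIntegral_prod_mul, ← Measure.volume_eq_prod,
    ← (volume_preserving_piFinSuccAbove (fun _ : Fin (n + 1) => ℝ) i).setIntegral_preimage_emb
      e.measurableEmbedding]
  exact congrArg _ (funext fun x => (hcomp x).symm)

theorem setIntegral_unitCube_mul {n : ℕ} (i : Fin (n + 1)) (g : ℝ → ℝ)
    {h : (Fin (n + 1) → ℝ) → ℝ}
    (hi : ∀ (x : Fin (n + 1) → ℝ) (t : ℝ), h (Function.update x i t) = h x) :
    ∫ x in unitCube (n + 1), g (x i) * h x =
      (∫ t in (0:ℝ)..1, g t) * ∫ x in unitCube (n + 1), h x := by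
  have hone := setIntegral_unitCube_mul_eq_insertNth i (fun _ => 1) hi
  simp only [one_mul, intervalIntegral.integral_const, sub_zero, smul_eq_mul] at hone
  rw [setIntegral_unitCube_mul_eq_insertNth i g hi, hone]

theorem integral_sub_half_sq : ∫ t in (0:ℝ)..1, (t - 1 / 2) ^ 2 = 1 / 12 := by
  rw [intervalIntegral.integral_comp_sub_right (fun t => t ^ 2)]
  norm_num [integral_pow]

theorem integral_mul_one_sub : ∫ t in (0:ℝ)..1, t * (1 - t) = 1 / 6 := by
  simp only [mul_sub, mul_one, ← sq]
  rw [intervalIntegral.integral_sub intervalIntegral.intervalIntegrable_id (by simp)]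
  norm_num [integral_pow]

theorem linear_in_xi_dgsm_general (d : ℕ) (i : Fin d) (a b : (Fin d → ℝ) → ℝ)
    (hai : ∀ (x : Fin d → ℝ) (t : ℝ), a (Function.update x i t) = a x)
    (hbi : ∀ (x : Fin d → ℝ) (t : ℝ), b (Function.update x i t) = b x) :
    DTot (fun x => a x * x i + b x) i = (1 / 12) * ∫ x in unitCube d, (a x) ^ 2 ∧
      nuDGSM (fun x => a x * x i + b x) i = ∫ x in unitCube d, (a x) ^ 2 ∧
      sigmaDGSM (fun x => a x * x i + b x) i =
        (1 / 2) * ∫ x in unitCube d, x i * (1 - x i) * (a x) ^ 2 ∧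
      sigmaDGSM (fun x => a x * x i + b x) i = DTot (fun x => a x * x i + b x) i := by
  obtain ⟨n, rfl⟩ : ∃ n, d = n + 1 := ⟨d - 1, by have := i.pos; omega⟩
  have ha2 (x : Fin (n + 1) → ℝ) (t : ℝ) : a (Function.update x i t) ^ 2 = a x ^ 2 := by
    rw [hai]
  have hDTot :
      DTot (fun x => a x * x i + b x) i = (1 / 12) * ∫ x in unitCube (n + 1), a x ^ 2 := by
    simp only [DTot, uComp_linear hai hbi, mul_pow, mul_comm (a _ ^ 2)]
    rw [setIntegral_unitCube_mul i (fun t => (t - 1 / 2) ^ 2) ha2, integral_sub_half_sq]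
  have hsigma : sigmaDGSM (fun x => a x * x i + b x) i =
      (1 / 2) * ∫ x in unitCube (n + 1), x i * (1 - x i) * a x ^ 2 := by
    simp only [sigmaDGSM, pderivI_linear hai hbi]
  refine ⟨hDTot, by simp only [nuDGSM, pderivI_linear hai hbi], hsigma, ?_⟩
  rw [hsigma, hDTot, setIntegral_unitCube_mul i (fun t => t * (1 - t)) ha2, integral_mul_one_sub]
  ring

/-- **Example 1 (function linear in `x_i`).** For `f(x) = a(x)·x_i + b(x)` with `a, b`
continuous and independent of the `i`-th coordinate, one has
`D_i^tot = (1/12)∫ a²`, `ν_i = ∫ a²`, `ς_i = (1/2)∫ x_i(1−x_i) a(x)² dx`, and the upper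
bound UB2 is attained with equality: `ς_i = D_i^tot`. -/
theorem linear_in_xi_dgsm (d : ℕ) (i : Fin d) (a b : (Fin d → ℝ) → ℝ)
    (haC : Continuous a) (hbC : Continuous b)
    (hai : ∀ (x : Fin d → ℝ) (t : ℝ), a (Function.update x i t) = a x)
    (hbi : ∀ (x : Fin d → ℝ) (t : ℝ), b (Function.update x i t) = b x) :
    DTot (fun x => a x * x i + b x) i = (1 / 12) * ∫ x in unitCube d, (a x) ^ 2 ∧
      nuDGSM (fun x => a x * x i + b x) i = ∫ x in unitCube d, (a x) ^ 2 ∧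
      sigmaDGSM (fun x => a x * x i + b x) i =
        (1 / 2) * ∫ x in unitCube d, x i * (1 - x i) * (a x) ^ 2 ∧
      sigmaDGSM (fun x => a x * x i + b x) i = DTot (fun x => a x * x i + b x) i :=
  linear_in_xi_dgsm_general d i a b hai hbi
end
end
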